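/- arXiv:2308.11852 — 6 statements merged into one kernel-verified Lean document; each statement's English description precedes it below -/
import Mathlib

section
/- Let (R, ▷) be a rack with inverse rack operation ◁, and suppose that for all x, y ∈ R there exists a positive integer n = n(x, y) such that applying the map z ↦ z ▷ y to x a total of n times returns x (i.e., x S_y^n = x, where (z)S_y = z ▷ y). Then every ▷-congruence on R is a ◁-congruence, and hence a rack congruence. -/
/-- If in a rack `(R, rt)` (with inverse operation `lt`) every orbit of every
symmetry `S_y : x ↦ rt x y` is finite (for all `x y` there is `n > 0` with
`S_y^[n] x = x`), then every `rt`-congruence on `R` is an `lt`-congruence. -/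
theorem stmt_5 {R : Type*} (rt lt : R → R → R)
    (hsd : ∀ x y z : R, rt (rt x y) z = rt (rt x z) (rt y z))
    (h1 : ∀ x y : R, lt (rt x y) y = x)
    (h2 : ∀ x y : R, rt (lt x y) y = x)
    (hfin : ∀ x y : R, ∃ n : ℕ, 0 < n ∧ (fun z => rt z y)^[n] x = x)
    (r : R → R → Prop) (hr : Equivalence r)
    (hc : ∀ a b c d : R, r a c → r b d → r (rt a b) (rt c d)) :
    ∀ a b c d : R, r a c → r b d → r (lt a b) (lt c d) := by
  intro a b c d hac hbd
  obtain ⟨n1, hn1, he1⟩ := hfin (lt a b) b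
  obtain ⟨n2, hn2, he2⟩ := hfin (lt c d) d
  have hmul : ∀ (y x : R) (n : ℕ), (fun z => rt z y)^[n] x = x →
      ∀ k, (fun z => rt z y)^[n * k] x = x := by
    intro y x n h k
    induction k with
    | zero => simp
    | succ k ih => rw [Nat.mul_succ, Function.iterate_add_apply, h, ih]
  set N := n1 * n2 with hN
  have hNpos : 0 < N := Nat.mul_pos hn1 hn2
  have hN1 : (fun z => rt z b)^[N] (lt a b) = lt a b := hmul b _ n1 he1 n2
  have hN2 : (fun z => rt z d)^[N] (lt c d) = lt c d := by
    rw [hN, Nat.mul_comm]; exact hmul d _ n2 he2 n1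
  have key : ∀ k (u v : R), r u v →
      r ((fun z => rt z b)^[k] u) ((fun z => rt z d)^[k] v) := by
    intro k
    induction k with
    | zero => intro u v h; simpa using h
    | succ k ih =>
      intro u v h
      rw [Function.iterate_succ_apply', Function.iterate_succ_apply']
      exact hc _ _ _ _ (ih u v h) hbd
  have eab : (fun z => rt z b)^[N - 1] a = lt a b := by
    conv_lhs => rw [← h2 a b]
    rw [← Function.iterate_succ_apply (fun z => rt z b) (N - 1) (lt a b),
      Nat.succ_eq_add_one, Nat.sub_add_cancel hNpos, hN1]
  have ecd : (fun z => rt z d)^[N - 1] c = lt c d := by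
    conv_lhs => rw [← h2 c d]
    rw [← Function.iterate_succ_apply (fun z => rt z d) (N - 1) (lt c d),
      Nat.succ_eq_add_one, Nat.sub_add_cancel hNpos, hN2]
  rw [← eab, ← ecd]
  exact key (N - 1) a c hac
end

section
/- Let (R, ▷) be a finite rack with inverse rack operation ◁. Then every ▷-congruence on R is also a ◁-congruence, and hence a rack congruence. -/
/-- In a finite rack `(R, rt)` with inverse operation `lt`, every
`rt`-congruence is an `lt`-congruence (hence a rack congruence). -/
theorem stmt_6 {R : Type*} [Finite R] (rt lt : R → R → R)
    (hsd : ∀ x y z : R, rt (rt x y) z = rt (rt x z) (rt y z))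
    (h1 : ∀ x y : R, lt (rt x y) y = x)
    (h2 : ∀ x y : R, rt (lt x y) y = x)
    (r : R → R → Prop) (hr : Equivalence r)
    (hc : ∀ a b c d : R, r a c → r b d → r (rt a b) (rt c d)) :
    ∀ a b c d : R, r a c → r b d → r (lt a b) (lt c d) := by
  intro a b c d hac hbd
  set f : R × R → R × R := fun p => (rt p.1 p.2, p.2) with hf
  set g : R × R → R × R := fun p => (lt p.1 p.2, p.2) with hg
  have hgf : ∀ p, g (f p) = p := fun p => by simp [hf, hg, h1]
  have hfg : ∀ p, f (g p) = p := fun p => by simp [hf, hg, h2]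
  let e : Equiv.Perm (R × R) := ⟨f, g, hgf, hfg⟩
  obtain ⟨n, hn, hen⟩ := isOfFinOrder_iff_pow_eq_one.mp (isOfFinOrder_of_finite e)
  have hiter : ∀ m (p q : R × R), r p.1 q.1 → r p.2 q.2 →
      r (f^[m] p).1 (f^[m] q).1 ∧ r (f^[m] p).2 (f^[m] q).2 := by
    intro m
    induction m with
    | zero => exact fun p q ha hb => ⟨ha, hb⟩
    | succ m ih =>
      intro p q ha hb
      rw [Function.iterate_succ_apply', Function.iterate_succ_apply']
      obtain ⟨ha', hb'⟩ := ih p q ha hb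
      exact ⟨hc _ _ _ _ ha' hb', hb'⟩
  have hid : ∀ p, f^[n] p = p := by
    intro p
    have : (e ^ n) p = p := by rw [hen]; rfl
    rwa [Equiv.Perm.coe_pow] at this
  have hginj : Function.Injective f := Function.LeftInverse.injective hgf
  have hgit : ∀ p, g p = f^[n - 1] p := by
    intro p
    apply hginj
    have hstep : f (f^[n - 1] p) = p := by
      rw [← Function.iterate_succ_apply' f (n - 1) p, Nat.succ_eq_add_one,
        Nat.sub_add_cancel hn, hid]
    rw [hfg, hstep]
  have := hiter (n - 1) (a, b) (c, d) hac hbd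
  rw [← hgit, ← hgit] at this
  exact this.1
end

section
/- Let B = {0,1}^ℤ with left- and right-shift operators ℓ, r given by (ℓ(a))_i = a_{i+1} and (r(a))_i = a_{i−1}. Define the relation ≃ on B by a ≃ b iff there exist s, t ∈ ℤ such that ℓˢ(a)_i = ℓᵗ(b)_i for all i ≥ 0. Define binary operations on B by: a ▸ b = a if a ≃ b and a ▸ b = ℓ(a) otherwise; a ◂ b = a if a ≃ b and a ◂ b = r(a) otherwise. Then ▸ is idempotent, right self-distributive, and right invertible with inverse operation ◂ (i.e., (a ▸ b) ◂ b = a and (a ◂ b) ▸ b = a for all a, b); hence (B, ▸) is a quandle. -/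
/-- Let `sim` be the relation on `ℤ → Bool` with `sim a b` iff there are
`s t : ℤ` with `a (i+s) = b (i+t)` for all `i ≥ 0`, and define `rt a b = a`
if `sim a b` and `rt a b = ℓ(a)` otherwise, `lt a b = a` if `sim a b` and
`lt a b = r(a)` otherwise. Then `rt` is idempotent, right self-distributive,
and right invertible with inverse operation `lt`; hence `(ℤ → Bool, rt)` is a
quandle. -/
theorem stmt_13 (sim : (ℤ → Bool) → (ℤ → Bool) → Prop)
    (hsim : ∀ a b, sim a b ↔ ∃ s t : ℤ, ∀ i : ℤ, 0 ≤ i → a (i + s) = b (i + t))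
    (rt lt : (ℤ → Bool) → (ℤ → Bool) → (ℤ → Bool))
    (hrt1 : ∀ a b, sim a b → rt a b = a)
    (hrt2 : ∀ a b, ¬ sim a b → rt a b = fun i => a (i + 1))
    (hlt1 : ∀ a b, sim a b → lt a b = a)
    (hlt2 : ∀ a b, ¬ sim a b → lt a b = fun i => a (i - 1)) :
    (∀ a, rt a a = a) ∧
    (∀ a b c, rt (rt a b) c = rt (rt a c) (rt b c)) ∧
    (∀ a b, lt (rt a b) b = a ∧ rt (lt a b) b = a) ∧
    (∀ b c, ∃! a, rt a b = c) := by
  have refl : ∀ a, sim a a := fun a => (hsim a a).2 ⟨0, 0, fun i _ => rfl⟩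
  have symm : ∀ a b, sim a b → sim b a := by
    intro a b h
    obtain ⟨s, t, h⟩ := (hsim a b).1 h
    exact (hsim b a).2 ⟨t, s, fun i hi => (h i hi).symm⟩
  have trans : ∀ a b c, sim a b → sim b c → sim a c := by
    intro a b c hab hbc
    obtain ⟨s, t, h1⟩ := (hsim a b).1 hab
    obtain ⟨s', t', h2⟩ := (hsim b c).1 hbc
    refine (hsim a c).2 ⟨max t s' - t + s, max t s' - s' + t', fun i hi => ?_⟩
    have hi1 : (0:ℤ) ≤ i + (max t s' - t) := by
      have := le_max_left t s'; omega
    have hi2 : (0:ℤ) ≤ i + (max t s' - s') := by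
      have := le_max_right t s'; omega
    have e1 := h1 (i + (max t s' - t)) hi1
    have e2 := h2 (i + (max t s' - s')) hi2
    have k1 : i + (max t s' - t + s) = i + (max t s' - t) + s := by ring
    have k2 : i + (max t s' - t) + t = i + (max t s' - s') + s' := by ring
    have k3 : i + (max t s' - s') + t' = i + (max t s' - s' + t') := by ring
    rw [k1, e1, k2, e2, k3]
  have simL : ∀ a, sim (fun i => a (i + 1)) a := by
    intro a
    refine (hsim _ a).2 ⟨0, 1, fun i _ => ?_⟩
    simp
  have simR : ∀ a, sim (fun i => a (i - 1)) a := by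
    intro a
    refine (hsim _ a).2 ⟨1, 0, fun i _ => ?_⟩
    simp
  -- rt a b is always sim to a, lt a b is always sim to a
  have rtsim : ∀ a b, sim (rt a b) a := by
    intro a b
    by_cases h : sim a b
    · rw [hrt1 a b h]; exact refl a
    · rw [hrt2 a b h]; exact simL a
  have ltsim : ∀ a b, sim (lt a b) a := by
    intro a b
    by_cases h : sim a b
    · rw [hlt1 a b h]; exact refl a
    · rw [hlt2 a b h]; exact simR a
  have inv1 : ∀ a b, lt (rt a b) b = a := by
    intro a b
    by_cases h : sim a b
    · rw [hrt1 a b h, hlt1 a b h]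
    · have h' : ¬ sim (rt a b) b := fun hc =>
        h (trans a (rt a b) b (symm _ _ (rtsim a b)) hc)
      rw [hrt2 a b h] at h' ⊢
      rw [hlt2 _ b h']
      funext i
      simp
  have inv2 : ∀ a b, rt (lt a b) b = a := by
    intro a b
    by_cases h : sim a b
    · rw [hlt1 a b h, hrt1 a b h]
    · have h' : ¬ sim (lt a b) b := fun hc =>
        h (trans a (lt a b) b (symm _ _ (ltsim a b)) hc)
      rw [hlt2 a b h] at h' ⊢
      rw [hrt2 _ b h']
      funext i
      simp
  refine ⟨fun a => hrt1 a a (refl a), ?_, fun a b => ⟨inv1 a b, inv2 a b⟩, ?_⟩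
  · intro a b c
    have hac : sim (rt a c) (rt b c) ↔ sim a b := by
      constructor
      · intro h
        exact trans _ _ _ (symm _ _ (rtsim a c))
          (trans _ _ _ h (rtsim b c))
      · intro h
        exact trans _ _ _ (rtsim a c) (trans _ _ _ h (symm _ _ (rtsim b c)))
    have hrtabc : sim (rt a b) c ↔ sim a c := by
      constructor
      · intro h; exact trans _ _ _ (symm _ _ (rtsim a b)) h
      · intro h; exact trans _ _ _ (rtsim a b) h
    by_cases hab : sim a b
    · rw [hrt1 a b hab, hrt1 _ _ (hac.2 hab)]
    · rw [hrt2 a b hab, hrt2 _ _ (fun h => hab (hac.1 h))]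
      by_cases hacs : sim a c
      · have hl : sim (fun i => a (i + 1)) c := trans _ _ _ (simL a) hacs
        rw [hrt1 _ c hl, hrt1 a c hacs]
      · have hl : ¬ sim (fun i => a (i + 1)) c := fun h =>
          hacs (trans _ _ _ (symm _ _ (simL a)) h)
        rw [hrt2 _ c hl, hrt2 a c hacs]
  · intro b c
    refine ⟨lt c b, inv2 c b, fun a ha => ?_⟩
    rw [← inv1 a b, ha]
end

section
/- Let B = {0,1}^ℤ with shifts ℓ, r given by (ℓ(a))_i = a_{i+1}, (r(a))_i = a_{i−1}, relations a ∼ b iff a_i = b_i for all i ≥ 0 and a ≃ b iff ∃ s, t ∈ ℤ with ℓˢ(a) ∼ ℓᵗ(b), and quandle operations a ▸ b = a if a ≃ b, else ℓ(a), and a ◂ b = a if a ≃ b, else r(a). Then the equivalence relation ∼ is a ▸-congruence on the quandle (B, ▸) but not a ◂-congruence; that is, ∼ is a half congruence on the quandle (B, ▸). -/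
lemma sim_transfer (a b c d : ℤ → Bool)
    (hac : ∀ i : ℤ, 0 ≤ i → a i = c i) (hbd : ∀ i : ℤ, 0 ≤ i → b i = d i)
    (h : ∃ s t : ℤ, ∀ i : ℤ, 0 ≤ i → a (i + s) = b (i + t)) :
    ∃ s t : ℤ, ∀ i : ℤ, 0 ≤ i → c (i + s) = d (i + t) := by
  obtain ⟨s, t, h⟩ := h
  refine ⟨s + (|s| + |t|), t + (|s| + |t|), fun i hi => ?_⟩
  have e1 : i + (s + (|s| + |t|)) = (i + (|s| + |t|)) + s := by ring
  have e2 : i + (t + (|s| + |t|)) = (i + (|s| + |t|)) + t := by ring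
  rw [e1, e2]
  have hm : 0 ≤ i + (|s| + |t|) := by positivity
  have h1 : 0 ≤ (i + (|s| + |t|)) + s := by
    have := abs_nonneg t; have := neg_abs_le s; omega
  have h2 : 0 ≤ (i + (|s| + |t|)) + t := by
    have := abs_nonneg s; have := neg_abs_le t; omega
  rw [← hac _ h1, ← hbd _ h2]
  exact h _ hm

/-- On the quandle `(ℤ → Bool, rt)` (where `rt a b = a` if `sim a b`, else the
left shift of `a`; and `lt a b = a` if `sim a b`, else the right shift of `a`),
the relation `a ∼ b ↔ ∀ i ≥ 0, a i = b i` is an equivalence relation that is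
an `rt`-congruence but not an `lt`-congruence: a half congruence. -/
theorem stmt_15 (sim : (ℤ → Bool) → (ℤ → Bool) → Prop)
    (hsim : ∀ a b, sim a b ↔ ∃ s t : ℤ, ∀ i : ℤ, 0 ≤ i → a (i + s) = b (i + t))
    (rt lt : (ℤ → Bool) → (ℤ → Bool) → (ℤ → Bool))
    (hrt1 : ∀ a b, sim a b → rt a b = a)
    (hrt2 : ∀ a b, ¬ sim a b → rt a b = fun i => a (i + 1))
    (hlt1 : ∀ a b, sim a b → lt a b = a)
    (hlt2 : ∀ a b, ¬ sim a b → lt a b = fun i => a (i - 1)) :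
    Equivalence (fun a b : ℤ → Bool => ∀ i : ℤ, 0 ≤ i → a i = b i) ∧
    (∀ a b c d : ℤ → Bool, (∀ i : ℤ, 0 ≤ i → a i = c i) →
      (∀ i : ℤ, 0 ≤ i → b i = d i) →
      ∀ i : ℤ, 0 ≤ i → rt a b i = rt c d i) ∧
    ¬ (∀ a b c d : ℤ → Bool, (∀ i : ℤ, 0 ≤ i → a i = c i) →
      (∀ i : ℤ, 0 ≤ i → b i = d i) →
      ∀ i : ℤ, 0 ≤ i → lt a b i = lt c d i) := by
  refine ⟨⟨fun a i _ => rfl, fun h i hi => (h i hi).symm,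
      fun h1 h2 i hi => (h1 i hi).trans (h2 i hi)⟩, ?_, ?_⟩
  · intro a b c d hac hbd i hi
    by_cases h : sim a b
    · have h' : sim c d := by
        rw [hsim] at h ⊢; exact sim_transfer a b c d hac hbd h
      rw [hrt1 a b h, hrt1 c d h']
      exact hac i hi
    · have h' : ¬ sim c d := by
        rw [hsim] at h ⊢
        exact fun hc => h (sim_transfer c d a b
          (fun j hj => (hac j hj).symm) (fun j hj => (hbd j hj).symm) hc)
      rw [hrt2 a b h, hrt2 c d h']
      exact hac (i + 1) (by omega)
  · intro H
    set a : ℤ → Bool := fun i => decide (i = -1) with ha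
    set c : ℤ → Bool := fun _ => false with hc
    set b : ℤ → Bool := fun _ => true with hb
    have hnab : ¬ sim a b := by
      rw [hsim]
      rintro ⟨s, t, h⟩
      have h0 := h 0 le_rfl
      have h1 := h 1 zero_le_one
      simp only [ha, hb, decide_eq_true_eq] at h0 h1
      omega
    have hncb : ¬ sim c b := by
      rw [hsim]
      rintro ⟨s, t, h⟩
      have h0 := h 0 le_rfl
      simp [hc, hb] at h0
    have hac : ∀ i : ℤ, 0 ≤ i → a i = c i := by
      intro i hi; simp only [ha, hc, decide_eq_false_iff_not]; omega
    have := H a b c b hac (fun _ _ => rfl) 0 le_rfl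
    rw [hlt2 a b hnab, hlt2 c b hncb] at this
    simp [ha, hc] at this
end

section
/- Let τ ∈ ℚ with τ ≠ 0 and τ ≠ 1, and let Q_τ be the weighted average quandle on ℚ with operation x ▷ y = τx + (1−τ)y. Then a relation ∼ on ℚ is a ▷-congruence on Q_τ (an equivalence relation such that a ∼ c and b ∼ d imply a ▷ b ∼ c ▷ d) if and only if there exists an additive subgroup D of ℚ, closed under multiplication by τ, such that for all x, y ∈ ℚ, x ∼ y if and only if y − x ∈ D. -/
/-- Characterisation of `▷`-congruences in the weighted average quandle on `ℚ`
with weight `τ ≠ 0, 1` and operation `x ▷ y = τx + (1-τ)y`: a relation `r` is a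
`▷`-congruence iff there is an additive subgroup `D` of `ℚ` closed under
multiplication by `τ` with `r x y ↔ y - x ∈ D`. -/
theorem stmt_16 (τ : ℚ) (hτ0 : τ ≠ 0) (hτ1 : τ ≠ 1) (r : ℚ → ℚ → Prop) :
    (Equivalence r ∧
      ∀ a b c d : ℚ, r a c → r b d →
        r (τ * a + (1 - τ) * b) (τ * c + (1 - τ) * d)) ↔
    ∃ D : AddSubgroup ℚ, (∀ d ∈ D, τ * d ∈ D) ∧ ∀ x y : ℚ, r x y ↔ y - x ∈ D := by
  have h1τ : (1 - τ) ≠ 0 := sub_ne_zero.mpr (Ne.symm hτ1)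
  constructor
  · rintro ⟨hE, hC⟩
    -- L1 : scale by τ and translate
    have L1 : ∀ x y t : ℚ, r x y → r (τ * x + t) (τ * y + t) := by
      intro x y t h
      have h' := hC x ((1 - τ)⁻¹ * t) y ((1 - τ)⁻¹ * t) h (hE.refl _)
      have e : (1 - τ) * ((1 - τ)⁻¹ * t) = t := by
        rw [← mul_assoc, mul_inv_cancel₀ h1τ, one_mul]
      rwa [e] at h'
    -- L2 : scale by (1-τ) and translate
    have L2 : ∀ x y t : ℚ, r x y → r ((1 - τ) * x + t) ((1 - τ) * y + t) := by
      intro x y t h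
      have h' := hC (τ⁻¹ * t) x (τ⁻¹ * t) y (hE.refl _) h
      have e : τ * (τ⁻¹ * t) = t := by
        rw [← mul_assoc, mul_inv_cancel₀ hτ0, one_mul]
      rw [e] at h'
      have e1 : t + (1 - τ) * x = (1 - τ) * x + t := by ring
      have e2 : t + (1 - τ) * y = (1 - τ) * y + t := by ring
      rwa [e1, e2] at h'
    -- full translation invariance
    have Tr : ∀ x y s : ℚ, r x y → r (x + s) (y + s) := by
      intro x y s h
      have h1 := L2 x y (τ * x + s) h
      have h2 := L1 x y ((1 - τ) * y + s) h
      have e1 : (1 - τ) * x + (τ * x + s) = x + s := by ring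
      have e2 : (1 - τ) * y + (τ * x + s) = τ * x + ((1 - τ) * y + s) := by ring
      have e3 : τ * y + ((1 - τ) * y + s) = y + s := by ring
      rw [e1, e2] at h1
      rw [e3] at h2
      exact hE.trans h1 h2
    refine ⟨{ carrier := {d | r 0 d}
              zero_mem' := hE.refl 0
              add_mem' := ?_
              neg_mem' := ?_ }, ?_, ?_⟩
    · intro d e hd he
      have h1 := Tr 0 e d he
      rw [zero_add, add_comm] at h1
      exact hE.trans hd h1
    · intro d hd
      have h1 := Tr d 0 (-d) (hE.symm hd)
      rw [add_neg_cancel, zero_add] at h1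
      exact h1
    · intro d hd
      have h1 := L1 0 d 0 hd
      rw [mul_zero, zero_add, add_zero] at h1
      exact h1
    · intro x y
      constructor
      · intro h
        have h1 := Tr x y (-x) h
        rw [add_neg_cancel] at h1
        show r 0 (y - x)
        rwa [sub_eq_add_neg]
      · intro h
        have h1 := Tr 0 (y - x) x h
        rw [zero_add, sub_add_cancel] at h1
        exact h1
  · rintro ⟨D, hτD, hD⟩
    have hmem : ∀ d : ℚ, d ∈ D → (1 - τ) * d ∈ D := by
      intro d hd
      have : (1 - τ) * d = d - τ * d := by ring
      rw [this]
      exact D.sub_mem hd (hτD d hd)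
    constructor
    · constructor
      · intro x; rw [hD, sub_self]; exact D.zero_mem
      · intro x y h
        rw [hD] at h ⊢
        have : x - y = -(y - x) := by ring
        rw [this]
        exact D.neg_mem h
      · intro x y z hxy hyz
        rw [hD] at hxy hyz ⊢
        have : z - x = (z - y) + (y - x) := by ring
        rw [this]
        exact D.add_mem hyz hxy
    · intro a b c d hac hbd
      rw [hD] at hac hbd ⊢
      have e : (τ * c + (1 - τ) * d) - (τ * a + (1 - τ) * b)
          = τ * (c - a) + (1 - τ) * (d - b) := by ring
      rw [e]
      exact D.add_mem (hτD _ hac) (hmem _ hbd)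
end

section
/- Let τ ∈ ℚ with τ ≠ 0 and τ ≠ 1, and suppose that neither τ nor τ⁻¹ is an integer. Let Q_τ be the weighted average quandle on ℚ with operation x ▷ y = τx + (1−τ)y and inverse operation x ◁ y = τ⁻¹x + (1−τ⁻¹)y. Then there exists a ▷-congruence on Q_τ that is not a ◁-congruence, and there exists a ◁-congruence on Q_τ that is not a ▷-congruence. -/
/-!
Fix a prime `ℓ` dividing the numerator of `τ`; it exists because `τ⁻¹` is not an integer.
Then `τ` lies in the local ring `ℤ_(ℓ) ⊆ ℚ` but `τ⁻¹` does not. Congruence modulo the additive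
subgroup `ℤ_(ℓ)` is compatible with `x ▷ y = τx + (1 - τ)y`, since
`(τa + (1 - τ)b) - (τc + (1 - τ)d) = τ(a - c) + (1 - τ)(b - d)`, but not with `◁`:
`1 ∼ 0` while `1 ◁ 0 = τ⁻¹ ≁ 0 = 0 ◁ 0`. Exchanging `τ` and `τ⁻¹` gives the other half.
-/

def IsWeightedAverageCongruence {R : Type*} [Ring R] (σ : R) (r : R → R → Prop) : Prop :=
  ∀ a b c d : R, r a c → r b d → r (σ * a + (1 - σ) * b) (σ * c + (1 - σ) * d)

theorem AddSubgroup.equivalence_sub_mem {G : Type*} [AddGroup G] (H : AddSubgroup G) :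
    Equivalence (fun a b : G => a - b ∈ H) where
  refl a := by simp
  symm {a b} h := by simpa using H.neg_mem h
  trans {a b c} hab hbc := by simpa using H.add_mem hab hbc

namespace Subring

variable {R : Type*} [CommRing R] (S : Subring R)

theorem isWeightedAverageCongruence_sub_mem {σ : R} (hσ : σ ∈ S) :
    IsWeightedAverageCongruence σ (fun a b => a - b ∈ S) := by
  intro a b c d hac hbd
  have hsplit : σ * a + (1 - σ) * b - (σ * c + (1 - σ) * d) = σ * (a - c) + (1 - σ) * (b - d) := by
    ring
  rw [hsplit]
  exact S.add_mem (S.mul_mem hσ hac) (S.mul_mem (S.sub_mem S.one_mem hσ) hbd)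

theorem not_isWeightedAverageCongruence_sub_mem {ρ : R} (hρ : ρ ∉ S) :
    ¬ IsWeightedAverageCongruence ρ (fun a b => a - b ∈ S) := by
  intro h
  exact hρ (by simpa using h 1 0 0 0 (by simp) (by simp))

theorem exists_equivalence_isWeightedAverageCongruence_not {σ ρ : R} (hσ : σ ∈ S) (hρ : ρ ∉ S) :
    ∃ r : R → R → Prop, Equivalence r ∧ IsWeightedAverageCongruence σ r ∧
      ¬ IsWeightedAverageCongruence ρ r :=
  ⟨_, S.toAddSubgroup.equivalence_sub_mem, S.isWeightedAverageCongruence_sub_mem hσ,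
    S.not_isWeightedAverageCongruence_sub_mem hρ⟩

end Subring

namespace Rat

/-- The localization `ℤ_(ℓ)`, as a subring of `ℚ`. -/
def localSubring (ℓ : ℕ) [hℓ : Fact ℓ.Prime] : Subring ℚ where
  carrier := {q | ¬ ℓ ∣ q.den}
  zero_mem' := by simpa using hℓ.out.not_dvd_one
  one_mem' := by simpa using hℓ.out.not_dvd_one
  neg_mem' := by simp
  add_mem' {p q} hp hq h := (hℓ.out.dvd_mul.1 (h.trans (add_den_dvd p q))).elim hp hq
  mul_mem' {p q} hp hq h := (hℓ.out.dvd_mul.1 (h.trans (mul_den_dvd p q))).elim hp hq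

theorem mem_localSubring {ℓ : ℕ} [Fact ℓ.Prime] {q : ℚ} : q ∈ localSubring ℓ ↔ ¬ ℓ ∣ q.den :=
  Iff.rfl

theorem exists_subring_mem_inv_not_mem (σ : ℚ) (hσinv : ∀ n : ℤ, σ⁻¹ ≠ n) :
    ∃ S : Subring ℚ, σ ∈ S ∧ σ⁻¹ ∉ S := by
  have hσ : σ ≠ 0 := fun h => hσinv 0 (by simp [h])
  have hden : σ⁻¹.den = σ.num.natAbs := den_inv_of_ne_zero hσ
  have hnum : σ.num.natAbs ≠ 1 := fun h =>
    hσinv σ⁻¹.num ((den_eq_one_iff _).1 (hden.trans h)).symm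
  set ℓ := σ.num.natAbs.minFac
  have : Fact ℓ.Prime := ⟨Nat.minFac_prime hnum⟩
  have hℓnum : ℓ ∣ σ.num.natAbs := Nat.minFac_dvd _
  refine ⟨localSubring ℓ, mem_localSubring.2 fun hℓden => ?_, mem_localSubring.not.2 ?_⟩
  · exact Nat.Prime.one_lt this.out |>.ne' <|
      Nat.Coprime.eq_one_of_dvd (σ.reduced.coprime_dvd_left hℓnum) hℓden
  · simpa [hden] using hℓnum

end Rat

theorem stmt_18_general (τ : ℚ)
    (hτZ : ∀ n : ℤ, τ ≠ (n : ℚ)) (hτinvZ : ∀ n : ℤ, τ⁻¹ ≠ (n : ℚ)) :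
    (∃ r : ℚ → ℚ → Prop, Equivalence r ∧
      (∀ a b c d : ℚ, r a c → r b d →
        r (τ * a + (1 - τ) * b) (τ * c + (1 - τ) * d)) ∧
      ¬ (∀ a b c d : ℚ, r a c → r b d →
        r (τ⁻¹ * a + (1 - τ⁻¹) * b) (τ⁻¹ * c + (1 - τ⁻¹) * d))) ∧
    (∃ r : ℚ → ℚ → Prop, Equivalence r ∧
      (∀ a b c d : ℚ, r a c → r b d →
        r (τ⁻¹ * a + (1 - τ⁻¹) * b) (τ⁻¹ * c + (1 - τ⁻¹) * d)) ∧
      ¬ (∀ a b c d : ℚ, r a c → r b d →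
        r (τ * a + (1 - τ) * b) (τ * c + (1 - τ) * d))) := by
  obtain ⟨S, hτS, hτinvS⟩ := Rat.exists_subring_mem_inv_not_mem τ hτinvZ
  obtain ⟨T, hτinvT, hτT⟩ := Rat.exists_subring_mem_inv_not_mem τ⁻¹ (by simpa using hτZ)
  rw [inv_inv] at hτT
  exact ⟨S.exists_equivalence_isWeightedAverageCongruence_not hτS hτinvS,
    T.exists_equivalence_isWeightedAverageCongruence_not hτinvT hτT⟩

/-- If `τ ∈ ℚ`, `τ ≠ 0, 1`, and neither `τ` nor `τ⁻¹` is an integer, then in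
the weighted average quandle on `ℚ` with operation `x ▷ y = τx + (1-τ)y` and
inverse operation `x ◁ y = τ⁻¹x + (1-τ⁻¹)y` there exists a `▷`-congruence that
is not a `◁`-congruence, and a `◁`-congruence that is not a `▷`-congruence. -/
theorem stmt_18 (τ : ℚ) (hτ0 : τ ≠ 0) (hτ1 : τ ≠ 1)
    (hτZ : ∀ n : ℤ, τ ≠ (n : ℚ)) (hτinvZ : ∀ n : ℤ, τ⁻¹ ≠ (n : ℚ)) :
    (∃ r : ℚ → ℚ → Prop, Equivalence r ∧
      (∀ a b c d : ℚ, r a c → r b d →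
        r (τ * a + (1 - τ) * b) (τ * c + (1 - τ) * d)) ∧
      ¬ (∀ a b c d : ℚ, r a c → r b d →
        r (τ⁻¹ * a + (1 - τ⁻¹) * b) (τ⁻¹ * c + (1 - τ⁻¹) * d))) ∧
    (∃ r : ℚ → ℚ → Prop, Equivalence r ∧
      (∀ a b c d : ℚ, r a c → r b d →
        r (τ⁻¹ * a + (1 - τ⁻¹) * b) (τ⁻¹ * c + (1 - τ⁻¹) * d)) ∧
      ¬ (∀ a b c d : ℚ, r a c → r b d →
        r (τ * a + (1 - τ) * b) (τ * c + (1 - τ) * d))) :=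
  stmt_18_general τ hτZ hτinvZ
end
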